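/- arXiv:2506.17737 — 2 statements merged into one kernel-verified Lean document; each statement's English description precedes it below -/
import Mathlib

section
/- Let k ≥ 1 and a ∈ (0,1). If M_{k,a} is differentiable at a point x ∈ (0,1) (i.e., the limit of the difference quotients (M_{k,a}(y) − M_{k,a}(x))/(y−x) as y → x exists as a finite real number), then M_{k,a}'(x) = 0. -/
open Filter Topology MeasureTheory Set
open scoped ENNReal

/-- The `(n+1)`-th ternary digit of `x` (choosing the expansion ending in all `0`s
when two expansions exist, and the all-`2`s expansion for `x = 1`). -/
noncomputable def tDigit (x : ℝ) (n : ℕ) : ℕ :=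
  if x = 1 then 2 else (⌊(3:ℝ) ^ (n + 1) * x⌋ - 3 * ⌊(3:ℝ) ^ n * x⌋).toNat

/-- `l_n(x)`: the number of `1`s among the first `n` ternary digits of `x`. -/
noncomputable def lCount (x : ℝ) (n : ℕ) : ℕ :=
  ((Finset.range n).filter (fun i => tDigit x i = 1)).card

/-- `q_a(d)` with `q_a(0)=0`, `q_a(1)=a`, `q_a(2)=1-a`. -/
noncomputable def qDig (a : ℝ) (d : ℕ) : ℝ :=
  if d = 0 then 0 else if d = 1 then a else 1 - a

/-- Okamoto's function `F_a`. -/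
noncomputable def Okamoto (a x : ℝ) : ℝ :=
  ∑' n : ℕ, a ^ (n - lCount x n) * (1 - 2 * a) ^ lCount x n * qDig a (tDigit x n)

/-- `M_{k,a}(x)`: the `k`-th partial derivative of `F_a(x)` with respect to `a`. -/
noncomputable def Mfun (k : ℕ) (a x : ℝ) : ℝ :=
  iteratedDeriv k (fun b => Okamoto b x) a

/-- `f` has derivative `+∞` at `x` (difference quotients over `y ∈ [0,1] \ {x}`). -/
def derivPInf (f : ℝ → ℝ) (x : ℝ) : Prop :=
  Tendsto (fun y => (f y - f x) / (y - x)) (𝓝[Set.Icc 0 1 \ {x}] x) atTop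

/-- `f` has derivative `-∞` at `x`. -/
def derivMInf (f : ℝ → ℝ) (x : ℝ) : Prop :=
  Tendsto (fun y => (f y - f x) / (y - x)) (𝓝[Set.Icc 0 1 \ {x}] x) atBot

noncomputable def phiOk (a : ℝ) : ℝ :=
  if a = 1/3 then 1/3 else if a = 1/2 then 0
  else Real.log (3 * a) / (Real.log a - Real.log |1 - 2 * a|)

noncomputable def C0 (a : ℝ) : ℝ := 1 / (Real.log a - Real.log |1 - 2 * a|)

noncomputable def hEnt (p : ℝ) : ℝ :=
  (-(p * Real.log p) - (1 - p) * Real.log (1 - p) + (1 - p) * Real.log 2) / Real.log 3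

noncomputable def dOk (a : ℝ) : ℝ := hEnt (phiOk a)

noncomputable def dTilde (a : ℝ) : ℝ := hEnt (1 - 2 * a)

/-!
For `x ∈ [0,1)` put `uₙ = ⌊3ⁿx⌋ / 3ⁿ` and `vₙ = uₙ + 3⁻ⁿ`. At triadic rationals `F_b` is a
polynomial in `b`, and `F_b(vₙ) - F_b(uₙ) = Gₙ(b) := okProd x n b`, the product over the first `n`
digits of `x` of `1 - 2b` (digit `1`) or `b` (digits `0`, `2`). So if `M_{k,a}'(x) = d`, then
`3ⁿ Gₙ⁽ᵏ⁾(a) → d`. The Leibniz rule for `Gₙ₊₁ = (b or 1 - 2b) Gₙ` lets one lower the order of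
differentiation one step at a time, ending with `3ⁿ Gₙ(a) → d (1 - 3a)ᵏ c` for some `c > 0`.
Now `3ⁿ⁺¹ Gₙ₊₁(a)` is `3a` or `3(1 - 2a)` times `3ⁿ Gₙ(a)`, and both factors stay away from `1`
unless `a = 1/3`, so the limit is `0` and `d = 0`. At `a = 1/3` instead `3ⁿ Gₙ(a) = 1`,
contradicting the limit `0`.
-/

open scoped ContDiff

lemma tDigit_eq_floor_mod {x : ℝ} (hx0 : 0 ≤ x) (hx1 : x ≠ 1) (i : ℕ) :
    tDigit x i = ⌊(3:ℝ) ^ (i + 1) * x⌋₊ % 3 := by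
  have hdiv : ⌊(3:ℝ) ^ i * x⌋₊ = ⌊(3:ℝ) ^ (i + 1) * x⌋₊ / 3 := by
    rw [← Nat.floor_div_natCast, pow_succ]
    congr 1
    field_simp
    norm_num
  rw [tDigit, if_neg hx1, ← Int.natCast_floor_eq_floor (by positivity),
    ← Int.natCast_floor_eq_floor (by positivity), hdiv]
  omega

lemma floor_pow_mul_natCast_div_pow (m : ℕ) {j n : ℕ} (h : j ≤ n) :
    ⌊(3:ℝ) ^ j * (m / 3 ^ n)⌋₊ = m / 3 ^ (n - j) := by
  rw [← Nat.floor_div_eq_div (K := ℝ)]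
  congr 1
  rw [← Nat.sub_add_cancel h, pow_add]
  push_cast
  field_simp
  simp

lemma floor_pow_mul_floor_pow_mul_div_pow (x : ℝ) {j n : ℕ} (h : j ≤ n) :
    ⌊(3:ℝ) ^ j * (⌊(3:ℝ) ^ n * x⌋₊ / 3 ^ n)⌋₊ = ⌊(3:ℝ) ^ j * x⌋₊ := by
  rw [floor_pow_mul_natCast_div_pow _ h, ← Nat.floor_div_natCast]
  congr 1
  rw [← Nat.sub_add_cancel h, pow_add]
  push_cast
  field_simp
  simp [mul_comm]

lemma natCast_div_pow_lt_one {m n : ℕ} (hm : m < 3 ^ n) : (m : ℝ) / 3 ^ n < 1 := by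
  rw [div_lt_one (by positivity)]
  exact_mod_cast hm

lemma tDigit_natCast_div_pow_of_le {m n i : ℕ} (hm : m < 3 ^ n) (hi : n ≤ i) :
    tDigit ((m : ℝ) / 3 ^ n) i = 0 := by
  rw [tDigit_eq_floor_mod (by positivity) (natCast_div_pow_lt_one hm).ne]
  have : (3:ℝ) ^ (i + 1) * (m / 3 ^ n) = ((m * 3 ^ (i - n) * 3 : ℕ) : ℝ) := by
    rw [show i + 1 = (i - n) + 1 + n by omega, pow_add, pow_succ]
    push_cast
    field_simp
  rw [this, Nat.floor_natCast]
  simp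

lemma tDigit_natCast_div_pow_succ {m n i : ℕ} (hm : m < 3 ^ (n + 1)) (hi : i < n) :
    tDigit ((m : ℝ) / 3 ^ (n + 1)) i = tDigit (((m / 3 : ℕ) : ℝ) / 3 ^ n) i := by
  have hm3 : m / 3 < 3 ^ n := by rw [pow_succ] at hm; omega
  rw [tDigit_eq_floor_mod (by positivity) (natCast_div_pow_lt_one hm).ne,
    tDigit_eq_floor_mod (by positivity) (natCast_div_pow_lt_one hm3).ne,
    floor_pow_mul_natCast_div_pow _ (by omega), floor_pow_mul_natCast_div_pow _ (by omega),
    Nat.div_div_eq_div_mul, ← pow_succ']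
  congr 3
  omega

lemma tDigit_natCast_div_pow_succ_self {m n : ℕ} (hm : m < 3 ^ (n + 1)) :
    tDigit ((m : ℝ) / 3 ^ (n + 1)) n = m % 3 := by
  rw [tDigit_eq_floor_mod (by positivity) (natCast_div_pow_lt_one hm).ne,
    floor_pow_mul_natCast_div_pow _ le_rfl]
  simp

lemma tDigit_floor_pow_mul_div_pow {x : ℝ} (hx0 : 0 ≤ x) (hx1 : x < 1) {n i : ℕ} (hi : i < n) :
    tDigit ((⌊(3:ℝ) ^ n * x⌋₊ : ℝ) / 3 ^ n) i = tDigit x i := by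
  have hlt : ⌊(3:ℝ) ^ n * x⌋₊ < 3 ^ n := by
    rw [Nat.floor_lt (by positivity)]
    push_cast
    nlinarith [pow_pos (show (0:ℝ) < 3 by norm_num) n]
  rw [tDigit_eq_floor_mod (by positivity) (natCast_div_pow_lt_one hlt).ne,
    tDigit_eq_floor_mod hx0 hx1.ne, floor_pow_mul_floor_pow_mul_div_pow x hi]

noncomputable def okFactor (b : ℝ) (e : ℕ) : ℝ := if e = 1 then 1 - 2 * b else b

noncomputable def okSlope (e : ℕ) : ℝ := if e = 1 then -2 else 1

noncomputable def okProd (x : ℝ) (n : ℕ) (b : ℝ) : ℝ :=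
  ∏ i ∈ Finset.range n, okFactor b (tDigit x i)

lemma okFactor_eq_add_mul (b : ℝ) (e : ℕ) : okFactor b e = okFactor 0 e + okSlope e * b := by
  unfold okFactor okSlope; split <;> ring

lemma one_sub_three_mul_okFactor (b : ℝ) (e : ℕ) :
    1 - 3 * okFactor b e = okSlope e * (1 - 3 * b) := by
  unfold okFactor okSlope; split <;> ring

lemma abs_okFactor_le_one {b : ℝ} (hb : b ∈ Set.Icc (0:ℝ) 1) (e : ℕ) : |okFactor b e| ≤ 1 := by
  obtain ⟨hb0, hb1⟩ := hb
  unfold okFactor; split <;> rw [abs_le] <;> constructor <;> linarith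

lemma one_le_abs_okSlope (e : ℕ) : 1 ≤ |okSlope e| := by
  unfold okSlope; split <;> norm_num

lemma okProd_succ (x : ℝ) (n : ℕ) (b : ℝ) :
    okProd x (n + 1) b = okFactor b (tDigit x n) * okProd x n b := by
  rw [okProd, Finset.prod_range_succ, mul_comm]; rfl

lemma okProd_congr {x y : ℝ} {n : ℕ} (h : ∀ i < n, tDigit x i = tDigit y i) :
    okProd x n = okProd y n := by
  funext b
  exact Finset.prod_congr rfl fun i hi => by rw [h i (Finset.mem_range.1 hi)]

lemma contDiff_okFactor (e : ℕ) : ContDiff ℝ ∞ (okFactor · e) := by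
  rw [funext (okFactor_eq_add_mul · e)]
  fun_prop

lemma contDiff_okProd (x : ℝ) (n : ℕ) : ContDiff ℝ ∞ (okProd x n) :=
  contDiff_prod fun i _ => contDiff_okFactor (tDigit x i)

lemma contDiff_qDig (e : ℕ) : ContDiff ℝ ∞ (qDig · e) := by
  unfold qDig; split_ifs <;> fun_prop

lemma okProd_eq_pow_mul_pow (x : ℝ) (n : ℕ) (b : ℝ) :
    okProd x n b = b ^ (n - lCount x n) * (1 - 2 * b) ^ lCount x n := by
  have hcard := Finset.card_filter_add_card_filter_not (s := Finset.range n) (tDigit x · = 1)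
  rw [Finset.card_range] at hcard
  have hone : ∀ j ∈ (Finset.range n).filter (tDigit x · = 1), okFactor b (tDigit x j) = 1 - 2 * b :=
    fun j hj => if_pos (Finset.mem_filter.1 hj).2
  have hother : ∀ j ∈ (Finset.range n).filter (¬tDigit x · = 1), okFactor b (tDigit x j) = b :=
    fun j hj => if_neg (Finset.mem_filter.1 hj).2
  rw [okProd, ← Finset.prod_filter_mul_prod_filter_not (Finset.range n) (tDigit x · = 1),
    Finset.prod_congr rfl hone, Finset.prod_congr rfl hother, Finset.prod_const,
    Finset.prod_const, mul_comm]
  congr 2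
  unfold lCount
  omega

lemma okamoto_eq_tsum (b x : ℝ) :
    Okamoto b x = ∑' n, okProd x n b * qDig b (tDigit x n) := by
  simp only [Okamoto, okProd_eq_pow_mul_pow]

lemma okamoto_natCast_div_pow (b : ℝ) {m n : ℕ} (hm : m < 3 ^ n) :
    Okamoto b ((m : ℝ) / 3 ^ n) = ∑ i ∈ Finset.range n,
      okProd ((m : ℝ) / 3 ^ n) i b * qDig b (tDigit ((m : ℝ) / 3 ^ n) i) := by
  rw [okamoto_eq_tsum, tsum_eq_sum fun i hi => ?_]
  rw [tDigit_natCast_div_pow_of_le hm (not_lt.1 (Finset.mem_range.not.1 hi))]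
  simp [qDig]

lemma contDiff_okamoto_natCast_div_pow {m n : ℕ} (hm : m < 3 ^ n) :
    ContDiff ℝ ∞ (Okamoto · ((m : ℝ) / 3 ^ n)) := by
  simp_rw [okamoto_natCast_div_pow _ hm]
  exact ContDiff.sum fun i _ => (contDiff_okProd _ i).mul (contDiff_qDig _)

lemma okamoto_natCast_div_pow_succ (b : ℝ) {m n : ℕ} (hm : m < 3 ^ (n + 1)) :
    Okamoto b ((m : ℝ) / 3 ^ (n + 1)) = Okamoto b (((m / 3 : ℕ) : ℝ) / 3 ^ n)
      + okProd (((m / 3 : ℕ) : ℝ) / 3 ^ n) n b * qDig b (m % 3) := by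
  have hm3 : m / 3 < 3 ^ n := by rw [pow_succ] at hm; omega
  have hdig := fun i (hi : i < n) => tDigit_natCast_div_pow_succ hm hi
  rw [okamoto_natCast_div_pow b hm, okamoto_natCast_div_pow b hm3, Finset.sum_range_succ,
    okProd_congr hdig, tDigit_natCast_div_pow_succ_self hm]
  congr 1
  refine Finset.sum_congr rfl fun i hi => ?_
  have hi := Finset.mem_range.1 hi
  rw [okProd_congr fun j hj => hdig j (hj.trans hi), hdig i hi]

lemma okProd_natCast_div_pow_succ (b : ℝ) {m n : ℕ} (hm : m < 3 ^ (n + 1)) :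
    okProd ((m : ℝ) / 3 ^ (n + 1)) (n + 1) b
      = okProd (((m / 3 : ℕ) : ℝ) / 3 ^ n) n b * okFactor b (m % 3) := by
  rw [okProd_succ, tDigit_natCast_div_pow_succ_self hm,
    okProd_congr fun i hi => tDigit_natCast_div_pow_succ hm hi, mul_comm]

lemma okamoto_natCast_succ_div_pow_sub (b : ℝ) {m n : ℕ} (hm : m + 1 < 3 ^ n) :
    Okamoto b (((m + 1 : ℕ) : ℝ) / 3 ^ n) - Okamoto b ((m : ℝ) / 3 ^ n)
      = okProd ((m : ℝ) / 3 ^ n) n b := by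
  induction n generalizing m with
  | zero => simp at hm
  | succ n ih =>
    rw [okamoto_natCast_div_pow_succ b hm, okamoto_natCast_div_pow_succ b (by omega),
      okProd_natCast_div_pow_succ b (by omega)]
    rcases Nat.lt_or_ge (m % 3) 2 with hr | hr
    · -- no carry: only the last digit changes
      rw [show (m + 1) / 3 = m / 3 by omega, show (m + 1) % 3 = m % 3 + 1 by omega,
        add_sub_add_left_eq_sub, ← mul_sub]
      congr 1
      interval_cases m % 3
      · simp [qDig, okFactor]
      · simp [qDig, okFactor, two_mul, sub_sub]
    · -- carry: the last digit drops from `2` to `0` and the prefix increases by one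
      have hm3 : m / 3 + 1 < 3 ^ n := by rw [pow_succ] at hm; omega
      have hq0 : qDig b 0 = 0 := if_pos rfl
      have hq2 : qDig b 2 = 1 - b := rfl
      have hf2 : okFactor b 2 = b := rfl
      rw [show (m + 1) / 3 = m / 3 + 1 by omega, show (m + 1) % 3 = 0 by omega,
        show m % 3 = 2 by omega, hq0, hq2, hf2]
      linear_combination ih hm3

lemma iteratedDeriv_affine (c s : ℝ) (j : ℕ) (a : ℝ) :
    iteratedDeriv j (fun b => c + s * b) a
      = if j = 0 then c + s * a else if j = 1 then s else 0 := by
  rcases j with _ | j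
  · simp
  · rw [iteratedDeriv_const_add j.succ_pos, show HMul.hMul s = s • (id : ℝ → ℝ) from rfl,
      iteratedDeriv_const_smul_field, iteratedDeriv_id]
    split_ifs <;> simp_all

lemma iteratedDeriv_succ_affine_mul (c s : ℝ) {f : ℝ → ℝ} (hf : ContDiff ℝ ∞ f) (m : ℕ) (a : ℝ) :
    iteratedDeriv (m + 1) (fun b => (c + s * b) * f b) a
      = (c + s * a) * iteratedDeriv (m + 1) f a + (m + 1) * s * iteratedDeriv m f a := by
  rw [iteratedDeriv_fun_mul (by fun_prop) (hf.contDiffAt.of_le (by exact_mod_cast le_top)),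
    Finset.sum_range_succ', Finset.sum_range_succ']
  simp only [iteratedDeriv_affine, Nat.add_eq_zero_iff, one_ne_zero, and_false, and_self,
    ↓reduceIte, Nat.add_eq_right, mul_zero, Nat.reduceSubDiff, zero_mul, Finset.sum_const_zero,
    zero_add, Nat.choose_one_right, Nat.cast_add, Nat.cast_one, add_tsub_cancel_right,
    Nat.choose_zero_right, one_mul, tsub_zero]
  ring

lemma iteratedDeriv_okProd_succ (x : ℝ) (n m : ℕ) (a : ℝ) :
    iteratedDeriv (m + 1) (okProd x (n + 1)) a
      = okFactor a (tDigit x n) * iteratedDeriv (m + 1) (okProd x n) a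
        + (m + 1) * okSlope (tDigit x n) * iteratedDeriv m (okProd x n) a := by
  have hsucc : okProd x (n + 1) = fun b =>
      (okFactor 0 (tDigit x n) + okSlope (tDigit x n) * b) * okProd x n b := by
    funext b
    rw [okProd_succ, ← okFactor_eq_add_mul]
  rw [hsucc, iteratedDeriv_succ_affine_mul _ _ (contDiff_okProd x n), ← okFactor_eq_add_mul]

/-- Solve the recursion `iteratedDeriv_okProd_succ` for the lower-order term: `|3 okFactor| ≤ 3` and
`|3 (m + 1) okSlope| ≥ 3` keep the errors under control. -/
lemma tendsto_pow_mul_iteratedDeriv_okProd_of_succ {x a L : ℝ} {m : ℕ}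
    (ha : a ∈ Set.Icc (0:ℝ) 1)
    (h : Tendsto (fun n => (3:ℝ) ^ n * iteratedDeriv (m + 1) (okProd x n) a) atTop (𝓝 L)) :
    Tendsto (fun n => (3:ℝ) ^ n * iteratedDeriv m (okProd x n) a) atTop
      (𝓝 (L * (1 - 3 * a) / (3 * (m + 1)))) := by
  set B := fun n => (3:ℝ) ^ n * iteratedDeriv (m + 1) (okProd x n) a
  set L' := L * (1 - 3 * a) / (3 * (m + 1))
  have hB : Tendsto (fun n => B n - L) atTop (𝓝 0) := tendsto_sub_nhds_zero_iff.2 h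
  have hbound : ∀ n, ‖(3:ℝ) ^ n * iteratedDeriv m (okProd x n) a - L'‖
      ≤ |B (n + 1) - L| + 3 * |B n - L| := by
    intro n
    set e := tDigit x n
    have hL' : 3 * (m + 1) * L' = L * (1 - 3 * a) := by
      simp only [L']
      field_simp
    have hkey : 3 * (m + 1) * okSlope e * ((3:ℝ) ^ n * iteratedDeriv m (okProd x n) a - L')
        = (B (n + 1) - L) - 3 * okFactor a e * (B n - L) := by
      simp only [B, iteratedDeriv_okProd_succ, pow_succ]
      linear_combination L * one_sub_three_mul_okFactor a e - okSlope e * hL'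
    have hden : 1 ≤ |3 * (m + 1) * okSlope e| := by
      rw [abs_mul, abs_of_pos (by positivity)]
      nlinarith [one_le_abs_okSlope e]
    calc ‖(3:ℝ) ^ n * iteratedDeriv m (okProd x n) a - L'‖
        ≤ |3 * (m + 1) * okSlope e| * |(3:ℝ) ^ n * iteratedDeriv m (okProd x n) a - L'| :=
          le_mul_of_one_le_left (abs_nonneg _) hden
      _ = |(B (n + 1) - L) - 3 * okFactor a e * (B n - L)| := by rw [← abs_mul, hkey]
      _ ≤ |B (n + 1) - L| + 3 * |B n - L| := by
          refine (abs_sub _ _).trans (add_le_add_right ?_ _)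
          rw [abs_mul, abs_mul, abs_of_pos three_pos]
          nlinarith [abs_okFactor_le_one ha e, abs_nonneg (B n - L)]
  refine tendsto_sub_nhds_zero_iff.1 (squeeze_zero_norm hbound ?_)
  simpa using ((hB.comp (tendsto_add_atTop_nat 1)).abs.add (hB.abs.const_mul 3))

lemma exists_tendsto_pow_mul_okProd {x a d : ℝ} {k : ℕ} (ha : a ∈ Set.Icc (0:ℝ) 1)
    (h : Tendsto (fun n => (3:ℝ) ^ n * iteratedDeriv k (okProd x n) a) atTop (𝓝 d)) :
    ∃ c > 0, Tendsto (fun n => (3:ℝ) ^ n * okProd x n a) atTop (𝓝 (d * (1 - 3 * a) ^ k * c)) := by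
  suffices hj : ∀ j ≤ k, ∃ c > 0,
      Tendsto (fun n => (3:ℝ) ^ n * iteratedDeriv (k - j) (okProd x n) a) atTop
        (𝓝 (d * (1 - 3 * a) ^ j * c)) by
    simpa using hj k le_rfl
  intro j
  induction j with
  | zero => exact fun _ => ⟨1, one_pos, by simpa using h⟩
  | succ j ih =>
    intro hj
    obtain ⟨c, hc, hlim⟩ := ih (by omega)
    rw [show k - j = k - (j + 1) + 1 by omega] at hlim
    refine ⟨c / (3 * ((k - (j + 1) : ℕ) + 1)), by positivity, ?_⟩
    convert tendsto_pow_mul_iteratedDeriv_okProd_of_succ ha hlim using 2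
    ring

lemma eq_zero_of_tendsto_pow_mul_okProd {x a L : ℝ} (ha : a ≠ 1 / 3)
    (h : Tendsto (fun n => (3:ℝ) ^ n * okProd x n a) atTop (𝓝 L)) : L = 0 := by
  set P := fun n => (3:ℝ) ^ n * okProd x n a
  have hδ : 0 < |1 - 3 * a| := abs_pos.2 fun h0 => ha (by linarith)
  -- `P (n + 1) = 3 okFactor P n`, and `3 okFactor` stays away from `1` unless `a = 1/3`
  have hbound : ∀ n, ‖P n‖ ≤ |P (n + 1) - P n| / |1 - 3 * a| := by
    intro n
    have hstep : P (n + 1) - P n = -(okSlope (tDigit x n) * (1 - 3 * a)) * P n := by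
      simp only [P, okProd_succ, pow_succ, ← one_sub_three_mul_okFactor]
      ring
    rw [le_div_iff₀ hδ, hstep, abs_mul, abs_neg, abs_mul, Real.norm_eq_abs]
    nlinarith [mul_le_mul_of_nonneg_right (one_le_abs_okSlope (tDigit x n))
      (mul_nonneg hδ.le (abs_nonneg (P n)))]
  have hdiff : Tendsto (fun n => |P (n + 1) - P n| / |1 - 3 * a|) atTop (𝓝 0) := by
    simpa using (((h.comp (tendsto_add_atTop_nat 1)).sub h).abs.div_const |1 - 3 * a|)
  exact tendsto_nhds_unique h (squeeze_zero_norm hbound hdiff)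

lemma pow_mul_okProd_one_third (x : ℝ) (n : ℕ) : (3:ℝ) ^ n * okProd x n (1 / 3) = 1 := by
  induction n with
  | zero => simp [okProd]
  | succ n ih =>
    have hfac : okFactor (1 / 3) (tDigit x n) = 1 / 3 := by
      unfold okFactor; split <;> norm_num
    rw [okProd_succ, hfac, pow_succ]
    linear_combination ih

open Asymptotics in
lemma HasDerivAt.tendsto_slope_of_le_of_le {ι : Type*} {l : Filter ι} {f : ℝ → ℝ} {x d : ℝ}
    (hd : HasDerivAt f d x) {u v : ι → ℝ} (hux : ∀ i, u i ≤ x) (hxv : ∀ i, x ≤ v i)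
    (huv : ∀ i, u i < v i) (hlen : Tendsto (fun i => v i - u i) l (𝓝 0)) :
    Tendsto (fun i => (f (v i) - f (u i)) / (v i - u i)) l (𝓝 d) := by
  have hu : Tendsto u l (𝓝 x) := by
    refine tendsto_of_tendsto_of_tendsto_of_le_of_le (g := fun i => x - (v i - u i))
      (by simpa using (tendsto_const_nhds (x := x)).sub hlen) tendsto_const_nhds
      (fun i => by linarith [hxv i]) hux
  have hv : Tendsto v l (𝓝 x) := by
    refine tendsto_of_tendsto_of_tendsto_of_le_of_le (h := fun i => x + (v i - u i))
      tendsto_const_nhds (by simpa using (tendsto_const_nhds (x := x)).add hlen) hxv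
      (fun i => by linarith [hux i])
  have hr := hasDerivAt_iff_isLittleO.1 hd
  have hbig : ∀ w : ι → ℝ, (∀ i, |w i - x| ≤ v i - u i) →
      (fun i => w i - x) =O[l] fun i => v i - u i := fun w hw =>
    IsBigO.of_bound 1 (Eventually.of_forall fun i => by
      rw [one_mul, Real.norm_eq_abs, Real.norm_eq_abs, abs_of_pos (sub_pos.2 (huv i))]
      exact hw i)
  have hlo := ((hr.comp_tendsto hv).trans_isBigO (hbig v fun i => by
      rw [abs_of_nonneg (sub_nonneg.2 (hxv i))]; linarith [hux i])).sub
    ((hr.comp_tendsto hu).trans_isBigO (hbig u fun i => by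
      rw [abs_of_nonpos (sub_nonpos.2 (hux i))]; linarith [hxv i]))
  have hquot := hlo.tendsto_div_nhds_zero.add_const d
  rw [zero_add] at hquot
  refine hquot.congr fun i => ?_
  have hne : v i - u i ≠ 0 := (sub_pos.2 (huv i)).ne'
  simp only [Function.comp, smul_eq_mul]
  field_simp
  ring

lemma mfun_natCast_succ_div_pow_sub (k : ℕ) (a : ℝ) {m n : ℕ} (hm : m + 1 < 3 ^ n) :
    Mfun k a (((m + 1 : ℕ) : ℝ) / 3 ^ n) - Mfun k a ((m : ℝ) / 3 ^ n)
      = iteratedDeriv k (okProd ((m : ℝ) / 3 ^ n) n) a := by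
  have hsplit : (Okamoto · (((m + 1 : ℕ) : ℝ) / 3 ^ n))
      = (Okamoto · ((m : ℝ) / 3 ^ n)) + okProd ((m : ℝ) / 3 ^ n) n := by
    funext b
    rw [Pi.add_apply, ← okamoto_natCast_succ_div_pow_sub b hm]
    ring
  rw [Mfun, Mfun, hsplit, iteratedDeriv_add
    ((contDiff_okamoto_natCast_div_pow (by omega)).contDiffAt.of_le (mod_cast le_top))
    ((contDiff_okProd _ n).contDiffAt.of_le (mod_cast le_top))]
  ring

-- Straddle `x` by the ternary intervals `[⌊3ⁿx⌋ / 3ⁿ, (⌊3ⁿx⌋ + 1) / 3ⁿ]`.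
lemma tendsto_pow_mul_iteratedDeriv_okProd {k : ℕ} {a x d : ℝ} (hx : x ∈ Set.Ico (0:ℝ) 1)
    (hd : HasDerivAt (Mfun k a) d x) :
    Tendsto (fun n => (3:ℝ) ^ n * iteratedDeriv k (okProd x n) a) atTop (𝓝 d) := by
  obtain ⟨hx0, hx1⟩ := hx
  set m := fun n : ℕ => ⌊(3:ℝ) ^ n * x⌋₊
  have hm : ∀ n, (m n : ℝ) ≤ 3 ^ n * x ∧ 3 ^ n * x < m n + 1 := fun n =>
    ⟨Nat.floor_le (by positivity), Nat.lt_floor_add_one _⟩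
  have hpow : Tendsto (fun n : ℕ => (3:ℝ) ^ n) atTop atTop :=
    tendsto_pow_atTop_atTop_of_one_lt (by norm_num)
  have hlt : ∀ᶠ n in atTop, m n + 1 < 3 ^ n := by
    filter_upwards [hpow.eventually_gt_atTop (1 / (1 - x))] with n hn
    rw [div_lt_iff₀ (by linarith)] at hn
    exact_mod_cast (show (m n : ℝ) + 1 < 3 ^ n by linarith [(hm n).1])
  have hslope := hd.tendsto_slope_of_le_of_le (l := atTop)
    (u := fun n => (m n : ℝ) / 3 ^ n) (v := fun n => ((m n + 1 : ℕ) : ℝ) / 3 ^ n)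
    (fun n => by rw [div_le_iff₀ (by positivity)]; linarith [(hm n).1])
    (fun n => by rw [le_div_iff₀ (by positivity)]; push_cast; linarith [(hm n).2])
    (fun n => by gcongr; exact_mod_cast (m n).lt_succ_self)
    (by simpa [add_div, Function.comp_def] using tendsto_inv_atTop_zero.comp hpow)
  refine hslope.congr' ?_
  filter_upwards [hlt] with n hn
  rw [mfun_natCast_succ_div_pow_sub k a hn,
    okProd_congr fun i hi => tDigit_floor_pow_mul_div_pow hx0 hx1 hi]
  push_cast
  field_simp
  ring

/-- if `M_{k,a}` is differentiable at `x ∈ (0,1)`, then `M_{k,a}'(x) = 0`. -/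
theorem stmt2 (k : ℕ) (hk : 1 ≤ k) (a : ℝ) (ha : a ∈ Set.Ioo (0:ℝ) 1)
    (x : ℝ) (hx : x ∈ Set.Ioo (0:ℝ) 1) (d : ℝ) (hd : HasDerivAt (Mfun k a) d x) :
    d = 0 := by
  have hlim := tendsto_pow_mul_iteratedDeriv_okProd (Set.Ioo_subset_Ico_self hx) hd
  obtain ⟨c, hc, hlim0⟩ := exists_tendsto_pow_mul_okProd (Set.Ioo_subset_Icc_self ha) hlim
  by_cases ha13 : a = 1 / 3
  · subst ha13
    simp only [pow_mul_okProd_one_third] at hlim0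
    have := tendsto_nhds_unique tendsto_const_nhds hlim0
    norm_num [zero_pow (by omega : k ≠ 0)] at this
  · have h0 := eq_zero_of_tendsto_pow_mul_okProd ha13 hlim0
    have h13 : (1 - 3 * a) ^ k ≠ 0 := pow_ne_zero _ fun h => ha13 (by linarith)
    simpa [h13, hc.ne'] using h0
end

section
/- Let k ≥ 1 and a ∈ (0,1) with a ≠ 1/2. There exists a two-variable real polynomial P_k(n, l) of the form P_k(n, l) = ((1−2a)n − l)^k + R_k(n, l), where R_k is a polynomial of total degree at most k−1 in (n, l), such that for all n ∈ ℕ and all integers 0 ≤ i < 3ⁿ, Δ_{k,a}(I_{n,i}) = a^{n−l(i)−k} (1−2a)^{l(i)−k} P_k(n, l(i)), where l(i) denotes the number of digits equal to 1 in the ternary representation of the integer i. -/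
/-!
At a triadic point `j / 3ⁿ` the series `F_b` is a finite sum, and splitting off the last ternary
digit of `i` shows that the increment of `F_b` over `I_{n,i}` is `b^(n-l) (1-2b)^l`, where `l`
counts the digits `1` of `i`. Hence `Δ_{k,a}(I_{n,i})` is the `k`-th derivative of
`b ↦ b^(n-l) (1-2b)^l` at `a`. By the Leibniz rule it equals `a^(n-l-k) (1-2a)^(l-k)` times
`∑ C(k,i) (1-2a)^i (-2a)^(k-i) (n-l)_i (l)_(k-i)` with falling factorials; replacing each falling
factorial by its leading power changes this only in degree `< k` and leaves
`((1-2a)(n-l) - 2a l)^k = ((1-2a)n - l)^k`.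
-/

open Filter Topology MeasureTheory Set
open scoped ENNReal

lemma three_pow_mul_natCast_div_of_le {m n : ℕ} (j : ℕ) (h : m ≤ n) :
    (3 : ℝ) ^ m * ((j : ℝ) / 3 ^ n) = (j : ℝ) / ((3 ^ (n - m) : ℕ) : ℝ) := by
  rw [← Nat.sub_add_cancel h]
  push_cast
  rw [Nat.add_sub_cancel, pow_add]
  field_simp

lemma three_pow_mul_natCast_div_of_ge {m n : ℕ} (j : ℕ) (h : n ≤ m) :
    (3 : ℝ) ^ m * ((j : ℝ) / 3 ^ n) = ((3 ^ (m - n) * j : ℕ) : ℝ) := by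
  rw [← Nat.sub_add_cancel h]
  push_cast
  rw [Nat.add_sub_cancel, pow_add]
  field_simp

lemma floor_three_pow_mul_natCast_div {m n : ℕ} (j : ℕ) (h : m ≤ n) :
    ⌊(3 : ℝ) ^ m * ((j : ℝ) / 3 ^ n)⌋ = (j / 3 ^ (n - m) : ℕ) := by
  rw [three_pow_mul_natCast_div_of_le j h, ← Int.natCast_floor_eq_floor (by positivity),
    Nat.floor_div_eq_div]

lemma natCast_div_three_pow_ne_one {j n : ℕ} (hj : j < 3 ^ n) : (j : ℝ) / 3 ^ n ≠ 1 := by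
  rw [Ne, div_eq_one_iff_eq (by positivity)]
  exact_mod_cast hj.ne

lemma tDigit_natCast_div_eq_zero {j n m : ℕ} (hj : j < 3 ^ n) (hm : n ≤ m) :
    tDigit ((j : ℝ) / 3 ^ n) m = 0 := by
  rw [tDigit, if_neg (natCast_div_three_pow_ne_one hj),
    three_pow_mul_natCast_div_of_ge j hm, three_pow_mul_natCast_div_of_ge j (by omega),
    Int.floor_natCast, Int.floor_natCast, Nat.sub_add_comm hm, pow_succ]
  push_cast
  simp [mul_comm, mul_left_comm]

lemma floor_three_pow_mul_three_mul_add_div {i d m n : ℕ} (hd : d < 3) (hm : m ≤ n) :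
    ⌊(3 : ℝ) ^ m * (((3 * i + d : ℕ) : ℝ) / 3 ^ (n + 1))⌋ = ⌊(3 : ℝ) ^ m * ((i : ℝ) / 3 ^ n)⌋ := by
  rw [floor_three_pow_mul_natCast_div _ (by omega), floor_three_pow_mul_natCast_div _ hm,
    Nat.sub_add_comm hm, pow_succ', ← Nat.div_div_eq_div_mul, (by omega : (3 * i + d) / 3 = i)]

lemma tDigit_three_mul_add_div_of_lt {i d n m : ℕ} (hi : i < 3 ^ n) (hd : d < 3) (hm : m < n) :
    tDigit (((3 * i + d : ℕ) : ℝ) / 3 ^ (n + 1)) m = tDigit ((i : ℝ) / 3 ^ n) m := by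
  have hi' : 3 * i + d < 3 ^ (n + 1) := by rw [pow_succ]; omega
  rw [tDigit, tDigit, if_neg (natCast_div_three_pow_ne_one hi),
    if_neg (natCast_div_three_pow_ne_one hi'), floor_three_pow_mul_three_mul_add_div hd hm,
    floor_three_pow_mul_three_mul_add_div hd hm.le]

lemma tDigit_three_mul_add_div_self {i d n : ℕ} (hi : i < 3 ^ n) (hd : d < 3) :
    tDigit (((3 * i + d : ℕ) : ℝ) / 3 ^ (n + 1)) n = d := by
  have hi' : 3 * i + d < 3 ^ (n + 1) := by rw [pow_succ]; omega
  rw [tDigit, if_neg (natCast_div_three_pow_ne_one hi'),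
    floor_three_pow_mul_three_mul_add_div hd le_rfl, floor_three_pow_mul_natCast_div _ le_rfl,
    floor_three_pow_mul_natCast_div _ le_rfl]
  simp only [tsub_self, pow_zero, Nat.div_one, Nat.cast_add, Nat.cast_mul, Nat.cast_ofNat,
    add_sub_cancel_left, Int.toNat_natCast]

lemma lCount_succ (x : ℝ) (m : ℕ) :
    lCount x (m + 1) = lCount x m + if tDigit x m = 1 then 1 else 0 := by
  simp only [lCount, Finset.card_filter, Finset.sum_range_succ]

lemma lCount_le (x : ℝ) (m : ℕ) : lCount x m ≤ m :=
  (Finset.card_filter_le _ _).trans (Finset.card_range m).le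

lemma lCount_three_mul_add_div {i d n m : ℕ} (hi : i < 3 ^ n) (hd : d < 3) (hm : m ≤ n) :
    lCount (((3 * i + d : ℕ) : ℝ) / 3 ^ (n + 1)) m = lCount ((i : ℝ) / 3 ^ n) m := by
  unfold lCount
  congr 1
  refine Finset.filter_congr fun r hr => ?_
  rw [tDigit_three_mul_add_div_of_lt hi hd (by simp at hr; omega)]

lemma count_digits_three_mul_add {d : ℕ} (i : ℕ) (hd : d < 3) :
    (Nat.digits 3 (3 * i + d)).count 1 = (Nat.digits 3 i).count 1 + if d = 1 then 1 else 0 := by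
  rcases Nat.eq_zero_or_pos (3 * i + d) with h | h
  · obtain ⟨rfl, rfl⟩ : i = 0 ∧ d = 0 := by omega
    simp
  · rw [add_comm, Nat.digits_add 3 (by norm_num) d i hd (by omega), List.count_cons]
    simp only [beq_iff_eq]

lemma lCount_natCast_div_eq_count {n i : ℕ} (hi : i < 3 ^ n) :
    lCount ((i : ℝ) / 3 ^ n) n = (Nat.digits 3 i).count 1 := by
  induction n generalizing i with
  | zero =>
    obtain rfl : i = 0 := by simpa using hi
    simp [lCount]
  | succ n ih =>
    obtain ⟨i, d, hd, rfl⟩ : ∃ i' d, d < 3 ∧ i = 3 * i' + d :=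
      ⟨i / 3, i % 3, Nat.mod_lt _ (by norm_num), (Nat.div_add_mod i 3).symm⟩
    have hi' : i < 3 ^ n := by rw [pow_succ] at hi; omega
    rw [lCount_succ, lCount_three_mul_add_div hi' hd le_rfl, tDigit_three_mul_add_div_self hi' hd,
      ih hi', count_digits_three_mul_add i hd]

lemma count_digits_le {n i : ℕ} (hi : i < 3 ^ n) : (Nat.digits 3 i).count 1 ≤ n :=
  lCount_natCast_div_eq_count hi ▸ lCount_le _ n

lemma okamoto_natCast_div {j n : ℕ} (hj : j < 3 ^ n) (b : ℝ) :
    Okamoto b ((j : ℝ) / 3 ^ n) = ∑ m ∈ Finset.range n,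
      b ^ (m - lCount ((j : ℝ) / 3 ^ n) m) * (1 - 2 * b) ^ lCount ((j : ℝ) / 3 ^ n) m *
        qDig b (tDigit ((j : ℝ) / 3 ^ n) m) := by
  refine tsum_eq_sum fun m hm => ?_
  rw [tDigit_natCast_div_eq_zero hj (by simpa using hm)]
  simp [qDig]

lemma okamoto_three_mul_add_div {i d n : ℕ} (hi : i < 3 ^ n) (hd : d < 3) (b : ℝ) :
    Okamoto b (((3 * i + d : ℕ) : ℝ) / 3 ^ (n + 1)) = Okamoto b ((i : ℝ) / 3 ^ n) +
      b ^ (n - (Nat.digits 3 i).count 1) * (1 - 2 * b) ^ (Nat.digits 3 i).count 1 * qDig b d := by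
  have hi' : 3 * i + d < 3 ^ (n + 1) := by rw [pow_succ]; omega
  rw [okamoto_natCast_div hi', okamoto_natCast_div hi, Finset.sum_range_succ,
    lCount_three_mul_add_div hi hd le_rfl, tDigit_three_mul_add_div_self hi hd,
    lCount_natCast_div_eq_count hi]
  congr 1
  refine Finset.sum_congr rfl fun m hm => ?_
  rw [Finset.mem_range] at hm
  rw [lCount_three_mul_add_div hi hd hm.le, tDigit_three_mul_add_div_of_lt hi hd hm]

lemma okamoto_one {b : ℝ} (hb : b ∈ Set.Ioo (0 : ℝ) 1) : Okamoto b 1 = 1 := by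
  have hl : ∀ m, lCount 1 m = 0 := fun m => by simp [lCount, tDigit]
  simp only [Okamoto, hl, tDigit, if_true, Nat.sub_zero, pow_zero, mul_one]
  rw [tsum_mul_right, tsum_geometric_of_lt_one hb.1.le hb.2, show qDig b 2 = 1 - b by simp [qDig],
    inv_mul_cancel₀ (by linarith [hb.2])]

lemma okamoto_zero (b : ℝ) : Okamoto b 0 = 0 := by
  simpa using okamoto_natCast_div (j := 0) (n := 0) one_pos b

lemma okamoto_natCast_succ_div_sub {b : ℝ} (hb : b ∈ Set.Ioo (0 : ℝ) 1) {n i : ℕ}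
    (hi : i < 3 ^ n) :
    Okamoto b (((i + 1 : ℕ) : ℝ) / 3 ^ n) - Okamoto b ((i : ℝ) / 3 ^ n) =
      b ^ (n - (Nat.digits 3 i).count 1) * (1 - 2 * b) ^ (Nat.digits 3 i).count 1 := by
  induction n generalizing i with
  | zero =>
    obtain rfl : i = 0 := by simpa using hi
    simp [okamoto_zero, okamoto_one hb]
  | succ n ih =>
    obtain ⟨i, d, hd, rfl⟩ : ∃ i' d, d < 3 ∧ i = 3 * i' + d :=
      ⟨i / 3, i % 3, Nat.mod_lt _ (by norm_num), (Nat.div_add_mod i 3).symm⟩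
    have hi' : i < 3 ^ n := by rw [pow_succ] at hi; omega
    have hc := count_digits_le hi'
    rw [count_digits_three_mul_add i hd, okamoto_three_mul_add_div hi' hd]
    interval_cases d
    · rw [okamoto_three_mul_add_div hi' (by norm_num : 1 < 3)]
      simp only [qDig, one_ne_zero, zero_ne_one, ↓reduceIte, mul_zero, add_zero,
        add_sub_cancel_left]
      rw [Nat.sub_add_comm hc, pow_succ]
      ring
    · rw [okamoto_three_mul_add_div hi' (by norm_num : 2 < 3)]
      simp only [qDig, OfNat.ofNat_ne_zero, OfNat.ofNat_ne_one, one_ne_zero, ↓reduceIte,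
        add_sub_add_left_eq_sub, Nat.reduceSubDiff]
      rw [pow_succ (1 - 2 * b)]
      ring
    · -- the carry `3 * i + 3 = 3 * (i + 1)` reduces this case to the increment at level `n`
      have hpt : (((3 * i + 2 + 1 : ℕ) : ℝ) / 3 ^ (n + 1)) = ((i + 1 : ℕ) : ℝ) / 3 ^ n := by
        push_cast; rw [pow_succ]; field_simp; ring
      rw [hpt, ← sub_sub, ih hi']
      simp only [qDig, OfNat.ofNat_ne_zero, OfNat.ofNat_ne_one, ↓reduceIte, add_zero]
      rw [Nat.sub_add_comm hc, pow_succ]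
      ring

lemma contDiff_okamoto_natCast_div {j n : ℕ} (hj : j < 3 ^ n) {N : WithTop ℕ∞} :
    ContDiff ℝ N (fun b => Okamoto b ((j : ℝ) / 3 ^ n)) := by
  have hq : ∀ d, ContDiff ℝ N (fun b => qDig b d) := fun d => by
    unfold qDig; split_ifs <;> fun_prop
  simp_rw [okamoto_natCast_div hj]
  exact ContDiff.sum fun m _ => by fun_prop

lemma mfun_natCast_succ_div_sub {a : ℝ} (ha : a ∈ Set.Ioo (0 : ℝ) 1) {n i : ℕ} (hi : i < 3 ^ n)
    (k : ℕ) :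
    Mfun k a (((i : ℝ) + 1) / 3 ^ n) - Mfun k a ((i : ℝ) / 3 ^ n) =
      iteratedDeriv k (fun b => b ^ (n - (Nat.digits 3 i).count 1) *
        (1 - 2 * b) ^ (Nat.digits 3 i).count 1) a := by
  -- `(i + 1) / 3 ^ n` may be `1`, where `Okamoto b` is no finite sum; the increment identity on
  -- the neighbourhood `Ioo 0 1` of `a` is all that is needed there.
  have heq : (fun b => Okamoto b (((i : ℝ) + 1) / 3 ^ n)) =ᶠ[𝓝 a]
      fun b => Okamoto b ((i : ℝ) / 3 ^ n) +
        b ^ (n - (Nat.digits 3 i).count 1) * (1 - 2 * b) ^ (Nat.digits 3 i).count 1 :=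
    Filter.eventually_of_mem (Ioo_mem_nhds ha.1 ha.2) fun b hb => by
      have h := okamoto_natCast_succ_div_sub hb hi
      push_cast at h
      exact eq_add_of_sub_eq' h
  rw [Mfun, Mfun, heq.iteratedDeriv_eq,
    iteratedDeriv_fun_add (contDiff_okamoto_natCast_div hi).contDiffAt (by fun_prop)]
  ring

lemma iteratedDeriv_one_sub_two_mul_pow (L j : ℕ) (x : ℝ) :
    iteratedDeriv j (fun b => (1 - 2 * b) ^ L) x =
      (-2) ^ j * (L.descFactorial j * (1 - 2 * x) ^ (L - j)) := by
  have h := congrFun (iteratedDeriv_comp_const_mul (n := j)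
    (f := fun z : ℝ => (1 - z) ^ L) (by fun_prop) 2) x
  rw [h, iteratedDeriv_comp_const_sub j (fun y : ℝ => y ^ L)]
  simp only [iteratedDeriv_pow, smul_eq_mul, neg_pow (2 : ℝ)]
  ring

lemma iteratedDeriv_pow_mul_one_sub_two_mul_pow (N L k : ℕ) (x : ℝ) :
    iteratedDeriv k (fun b => b ^ N * (1 - 2 * b) ^ L) x =
      ∑ i ∈ Finset.range (k + 1), k.choose i * (N.descFactorial i * x ^ (N - i)) *
        ((-2) ^ (k - i) * (L.descFactorial (k - i) * (1 - 2 * x) ^ (L - (k - i)))) := by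
  rw [iteratedDeriv_fun_mul (by fun_prop) (by fun_prop)]
  simp only [iteratedDeriv_pow, iteratedDeriv_one_sub_two_mul_pow]

lemma descFactorial_mul_pow_sub_eq_zpow_mul {x : ℝ} (hx : x ≠ 0) (N : ℕ) {i k : ℕ}
    (hik : i ≤ k) :
    (N.descFactorial i : ℝ) * x ^ (N - i) =
      x ^ ((N : ℤ) - k) * (N.descFactorial i * x ^ (k - i)) := by
  rcases le_or_gt i N with h | h
  · rw [← zpow_natCast x (N - i), ← zpow_natCast x (k - i), mul_left_comm, ← zpow_add₀ hx]
    push_cast [h, hik]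
    ring_nf
  · simp [Nat.descFactorial_eq_zero_iff_lt.2 h]

lemma iteratedDeriv_pow_mul_one_sub_two_mul_pow_eq_zpow_mul {a : ℝ} (ha : a ≠ 0)
    (ha' : 1 - 2 * a ≠ 0) (N L k : ℕ) :
    iteratedDeriv k (fun b => b ^ N * (1 - 2 * b) ^ L) a =
      a ^ ((N : ℤ) - k) * (1 - 2 * a) ^ ((L : ℤ) - k) *
        ∑ i ∈ Finset.range (k + 1), k.choose i * (1 - 2 * a) ^ i * (-2 * a) ^ (k - i) *
          N.descFactorial i * L.descFactorial (k - i) := by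
  rw [iteratedDeriv_pow_mul_one_sub_two_mul_pow, Finset.mul_sum]
  refine Finset.sum_congr rfl fun i hi => ?_
  have hik : i ≤ k := Nat.lt_succ_iff.1 (Finset.mem_range.1 hi)
  rw [descFactorial_mul_pow_sub_eq_zpow_mul ha N hik,
    descFactorial_mul_pow_sub_eq_zpow_mul ha' L (Nat.sub_le k i), Nat.sub_sub_self hik]
  ring

section DescPochhammerBinomial

open MvPolynomial

variable {σ R : Type*}

lemma MvPolynomial.totalDegree_aeval_le [CommSemiring R] {q : MvPolynomial σ R}
    (hq : q.totalDegree ≤ 1) (p : Polynomial R) :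
    (Polynomial.aeval q p).totalDegree ≤ p.natDegree := by
  rw [Polynomial.aeval_eq_sum_range]
  refine totalDegree_finsetSum_le fun i hi => (totalDegree_smul_le _ _).trans ?_
  have hi := Finset.mem_range_succ_iff.1 hi
  calc (q ^ i).totalDegree ≤ i * q.totalDegree := totalDegree_pow _ _
    _ ≤ p.natDegree := by nlinarith

lemma MvPolynomial.eval_polynomial_aeval [CommSemiring R] (v : σ → R) (q : MvPolynomial σ R)
    (p : Polynomial R) : eval v (Polynomial.aeval q p) = p.eval (eval v q) := by
  rw [← aeval_eq_eval, ← Polynomial.aeval_algHom_apply, Polynomial.coe_aeval_eq_eval, aeval_eq_eval]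

lemma natDegree_descPochhammer_sub_X_pow_le [CommRing R] [IsDomain R] (m : ℕ) :
    (descPochhammer R m - Polynomial.X ^ m).natDegree ≤ m - 1 := by
  rcases Nat.eq_zero_or_pos m with rfl | hm
  · simp
  · exact Nat.le_sub_one_of_lt <| Polynomial.IsMonicOfDegree.natDegree_sub_X_pow hm.ne'
      ⟨descPochhammer_natDegree R m, monic_descPochhammer R m⟩

variable [CommRing R] {q₁ q₂ : MvPolynomial σ R}

lemma totalDegree_aeval_descPochhammer_mul_sub_le [IsDomain R] (h₁ : q₁.totalDegree ≤ 1)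
    (h₂ : q₂.totalDegree ≤ 1) (m e : ℕ) :
    (Polynomial.aeval q₁ (descPochhammer R m) * Polynomial.aeval q₂ (descPochhammer R e) -
      q₁ ^ m * q₂ ^ e).totalDegree ≤ m + e - 1 := by
  have hsplit :
      Polynomial.aeval q₁ (descPochhammer R m) * Polynomial.aeval q₂ (descPochhammer R e) -
        q₁ ^ m * q₂ ^ e =
      Polynomial.aeval q₁ (descPochhammer R m - Polynomial.X ^ m) *
          Polynomial.aeval q₂ (descPochhammer R e) +
        q₁ ^ m * Polynomial.aeval q₂ (descPochhammer R e - Polynomial.X ^ e) := by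
    simp only [map_sub, map_pow, Polynomial.aeval_X]
    ring
  have hA := (totalDegree_aeval_le h₁ _).trans (natDegree_descPochhammer_sub_X_pow_le (R := R) m)
  have hB := (totalDegree_aeval_le h₂ _).trans (natDegree_descPochhammer_sub_X_pow_le (R := R) e)
  have hD := descPochhammer_natDegree R e ▸ totalDegree_aeval_le h₂ (descPochhammer R e)
  have hP : (q₁ ^ m).totalDegree ≤ m := (totalDegree_pow _ _).trans (by nlinarith)
  rw [hsplit]
  refine (totalDegree_add _ _).trans (max_le ?_ ?_)
  · rcases Nat.eq_zero_or_pos m with rfl | hm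
    · simp
    · exact (totalDegree_mul _ _).trans (by omega)
  · rcases Nat.eq_zero_or_pos e with rfl | he
    · simp
    · exact (totalDegree_mul _ _).trans (by omega)

/- With `q₁ = X 0 - X 1`, `q₂ = X 1`, `α = 1 - 2a` and `β = -2a` this is the paper's `P_k(n, l)`. -/
variable (q₁ q₂) in
noncomputable def descPochhammerBinomial (α β : R) (k : ℕ) : MvPolynomial σ R :=
  ∑ i ∈ Finset.range (k + 1), C (k.choose i * α ^ i * β ^ (k - i)) *
    (Polynomial.aeval q₁ (descPochhammer R i) * Polynomial.aeval q₂ (descPochhammer R (k - i)))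

lemma totalDegree_descPochhammerBinomial_sub_le [IsDomain R] (h₁ : q₁.totalDegree ≤ 1)
    (h₂ : q₂.totalDegree ≤ 1) (α β : R) (k : ℕ) :
    (descPochhammerBinomial q₁ q₂ α β k - (C α * q₁ + C β * q₂) ^ k).totalDegree ≤ k - 1 := by
  rw [add_pow, descPochhammerBinomial, ← Finset.sum_sub_distrib]
  refine totalDegree_finsetSum_le fun i hi => ?_
  have hik : i ≤ k := Finset.mem_range_succ_iff.1 hi
  have hterm : C (k.choose i * α ^ i * β ^ (k - i)) *
      (Polynomial.aeval q₁ (descPochhammer R i) * Polynomial.aeval q₂ (descPochhammer R (k - i))) -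
      (C α * q₁) ^ i * (C β * q₂) ^ (k - i) * (k.choose i : MvPolynomial σ R) =
      C (k.choose i * α ^ i * β ^ (k - i)) *
      (Polynomial.aeval q₁ (descPochhammer R i) * Polynomial.aeval q₂ (descPochhammer R (k - i)) -
        q₁ ^ i * q₂ ^ (k - i)) := by
    simp only [map_mul, map_pow, map_natCast, mul_pow]
    ring
  rw [hterm]
  refine (totalDegree_mul _ _).trans ?_
  rw [totalDegree_C, zero_add]
  simpa [Nat.add_sub_cancel' hik] using totalDegree_aeval_descPochhammer_mul_sub_le h₁ h₂ i (k - i)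

lemma eval_descPochhammerBinomial (v : σ → R) (α β : R) (k : ℕ) :
    eval v (descPochhammerBinomial q₁ q₂ α β k) = ∑ i ∈ Finset.range (k + 1),
      k.choose i * α ^ i * β ^ (k - i) * (descPochhammer R i).eval (eval v q₁) *
        (descPochhammer R (k - i)).eval (eval v q₂) := by
  simp only [descPochhammerBinomial, map_sum, map_mul, eval_C, eval_polynomial_aeval, mul_assoc]

end DescPochhammerBinomial

theorem stmt19_general (k : ℕ) (a : ℝ) (ha : a ∈ Set.Ioo (0:ℝ) 1) (ha' : a ≠ 1/2) :
    ∃ R : MvPolynomial (Fin 2) ℝ, R.totalDegree ≤ k - 1 ∧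
      ∀ n : ℕ, ∀ i : ℕ, i < 3 ^ n →
        Mfun k a (((i : ℝ) + 1) / 3 ^ n) - Mfun k a ((i : ℝ) / 3 ^ n) =
          a ^ ((n : ℤ) - ((Nat.digits 3 i).count 1 : ℤ) - (k : ℤ)) *
          (1 - 2 * a) ^ (((Nat.digits 3 i).count 1 : ℤ) - (k : ℤ)) *
          (((1 - 2 * a) * (n : ℝ) - ((Nat.digits 3 i).count 1 : ℝ)) ^ k +
            MvPolynomial.eval ![(n : ℝ), ((Nat.digits 3 i).count 1 : ℝ)] R) := by
  open MvPolynomial in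
  have hdeg₁ : (X 0 - X 1 : MvPolynomial (Fin 2) ℝ).totalDegree ≤ 1 :=
    (totalDegree_sub _ _).trans (by simp [totalDegree_X])
  have hdeg₂ : (X 1 : MvPolynomial (Fin 2) ℝ).totalDegree ≤ 1 := by simp [totalDegree_X]
  refine ⟨_, totalDegree_descPochhammerBinomial_sub_le hdeg₁ hdeg₂ (1 - 2 * a) (-2 * a) k,
    fun n i hi => ?_⟩
  rw [mfun_natCast_succ_div_sub ha hi, iteratedDeriv_pow_mul_one_sub_two_mul_pow_eq_zpow_mul
    ha.1.ne' (by contrapose! ha'; linarith)]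
  have hl := count_digits_le hi
  generalize (Nat.digits 3 i).count 1 = l at hl ⊢
  have hv₁ : eval ![(n : ℝ), (l : ℝ)] (X 0 - X 1) = ((n - l : ℕ) : ℝ) := by simp [Nat.cast_sub hl]
  have hv₂ : eval ![(n : ℝ), (l : ℝ)] (X 1) = l := by simp
  have hv : eval ![(n : ℝ), (l : ℝ)] (C (1 - 2 * a) * (X 0 - X 1) + C (-2 * a) * X 1) =
      (1 - 2 * a) * n - l := by
    rw [map_add, map_mul, map_mul, hv₁, hv₂, eval_C, eval_C, Nat.cast_sub hl]
    ring
  rw [map_sub, map_pow, hv, eval_descPochhammerBinomial, hv₁, hv₂]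
  simp only [descPochhammer_eval_eq_descFactorial]
  push_cast [Nat.cast_sub hl]
  ring

/-- for `k ≥ 1` and `a ∈ (0,1)`, `a ≠ 1/2`, there is a two-variable
polynomial `P_k(n,l) = ((1-2a)n - l)^k + R_k(n,l)` with `deg R_k ≤ k-1` such that
`Δ_{k,a}(I_{n,i}) = a^{n-l(i)-k} (1-2a)^{l(i)-k} P_k(n, l(i))` for all `n` and `0 ≤ i < 3^n`,
where `l(i)` counts the ternary digits of `i` equal to `1`. -/
theorem stmt19 (k : ℕ) (hk : 1 ≤ k) (a : ℝ) (ha : a ∈ Set.Ioo (0:ℝ) 1) (ha' : a ≠ 1/2) :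
    ∃ R : MvPolynomial (Fin 2) ℝ, R.totalDegree ≤ k - 1 ∧
      ∀ n : ℕ, ∀ i : ℕ, i < 3 ^ n →
        Mfun k a (((i : ℝ) + 1) / 3 ^ n) - Mfun k a ((i : ℝ) / 3 ^ n) =
          a ^ ((n : ℤ) - ((Nat.digits 3 i).count 1 : ℤ) - (k : ℤ)) *
          (1 - 2 * a) ^ (((Nat.digits 3 i).count 1 : ℤ) - (k : ℤ)) *
          (((1 - 2 * a) * (n : ℝ) - ((Nat.digits 3 i).count 1 : ℝ)) ^ k +
            MvPolynomial.eval ![(n : ℝ), ((Nat.digits 3 i).count 1 : ℝ)] R) :=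
  stmt19_general k a ha ha'
end
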